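/- arXiv:2402.05846 — 2 statements merged into one kernel-verified Lean document; each statement's English description precedes it below -/
import Mathlib

section
/- Let S be a semigroup with H_H(S) = n < ∞. Then for every a ∈ S, the element a^n is H-related to a^{2n}; consequently the H-class of a^n is a subgroup of S, so S is group-bound (every element has a power lying in a subgroup). -/
namespace GreenHeights

universe u

section Defs

variable {S : Type u} [Semigroup S]

/-- Green's preorder `≤_L`: `a ≤_L b` iff `a = s * b` for some `s ∈ S¹`
(i.e. `a = b` or `a = s * b` for some `s ∈ S`). -/
def leL (a b : S) : Prop := a = b ∨ ∃ s : S, a = s * b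

/-- Green's preorder `≤_R`: `a ≤_R b` iff `a = b * s` for some `s ∈ S¹`. -/
def leR (a b : S) : Prop := a = b ∨ ∃ s : S, a = b * s

/-- Green's preorder `≤_J`: `a ≤_J b` iff `a = s * b * t` for some `s, t ∈ S¹`. -/
def leJ (a b : S) : Prop :=
  a = b ∨ (∃ s : S, a = s * b) ∨ (∃ t : S, a = b * t) ∨ ∃ s t : S, a = s * b * t

/-- Green's preorder `≤_H`. -/
def leH (a b : S) : Prop := leL a b ∧ leR a b

/-- Green's relation `L`. -/
def eqvL (a b : S) : Prop := leL a b ∧ leL b a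

/-- Green's relation `R`. -/
def eqvR (a b : S) : Prop := leR a b ∧ leR b a

/-- Green's relation `J`. -/
def eqvJ (a b : S) : Prop := leJ a b ∧ leJ b a

/-- Green's relation `H`. -/
def eqvH (a b : S) : Prop := leH a b ∧ leH b a

/-- `a <_L b`. -/
def ltL (a b : S) : Prop := leL a b ∧ ¬ leL b a

/-- `a <_R b`. -/
def ltR (a b : S) : Prop := leR a b ∧ ¬ leR b a

/-- `a <_J b`. -/
def ltJ (a b : S) : Prop := leJ a b ∧ ¬ leJ b a

/-- `a <_H b`. -/
def ltH (a b : S) : Prop := leH a b ∧ ¬ leH b a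

end Defs

/-- The set of lengths of strictly decreasing chains with respect to a relation `lt`:
`m` is a chain length if there is a sequence `c 0 >' c 1 >' … >' c (m-1)`. -/
def chainLengths {T : Type u} (lt : T → T → Prop) : Set ℕ :=
  {m | ∃ c : Fin m → T, ∀ i j : Fin m, i < j → lt (c j) (c i)}

/-- The height: the supremum, in `ℕ∞`, of the lengths of strictly decreasing chains. -/
noncomputable def heightOf {T : Type u} (lt : T → T → Prop) : ℕ∞ :=
  ⨆ m ∈ chainLengths lt, (m : ℕ∞)

/-- The `L`-height of a semigroup. -/
noncomputable def HL (S : Type u) [Semigroup S] : ℕ∞ := heightOf (ltL (S := S))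

/-- The `R`-height of a semigroup. -/
noncomputable def HR (S : Type u) [Semigroup S] : ℕ∞ := heightOf (ltR (S := S))

/-- The `J`-height of a semigroup. -/
noncomputable def HJ (S : Type u) [Semigroup S] : ℕ∞ := heightOf (ltJ (S := S))

/-- The `H`-height of a semigroup. -/
noncomputable def HH (S : Type u) [Semigroup S] : ℕ∞ := heightOf (ltH (S := S))

/-- `S` is left stable if `a ≤_L b` and `a J b` imply `a L b`. -/
def LeftStable (S : Type u) [Semigroup S] : Prop :=
  ∀ a b : S, leL a b → eqvJ a b → eqvL a b

/-- `S` is right stable if `a ≤_R b` and `a J b` imply `a R b`. -/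
def RightStable (S : Type u) [Semigroup S] : Prop :=
  ∀ a b : S, leR a b → eqvJ a b → eqvR a b

/-- `S` is stable if it is both left and right stable. -/
def Stable (S : Type u) [Semigroup S] : Prop := LeftStable S ∧ RightStable S

section Stmt2

variable {S : Type u} [Semigroup S]

/-- Positive powers in a semigroup: for `n ≥ 1`, `spow a n = aⁿ`.
(The value at `0` is a junk value, `a`.) -/
def spow (a : S) : ℕ → S
  | 0 => a
  | 1 => a
  | n + 2 => spow a (n + 1) * a

/-- `G` is a subgroup of `S`: a subsemigroup which is a group under the restricted
multiplication. -/
def IsSubgroupSet (G : Set S) : Prop :=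
  (∀ x ∈ G, ∀ y ∈ G, x * y ∈ G) ∧
  ∃ e ∈ G, (∀ x ∈ G, e * x = x ∧ x * e = x) ∧ ∀ x ∈ G, ∃ y ∈ G, x * y = e ∧ y * x = e

end Stmt2

section Aux
variable {S : Type u} [Semigroup S]

variable {S : Type u} [Semigroup S]
def lact : Option S → S → S
  | none, b => b
  | some s, b => s * b
def ract : S → Option S → S
  | b, none => b
  | b, some t => b * t
lemma lact_mul (s : Option S) (b c : S) : lact s b * c = lact s (b * c) := by
  cases s <;> simp [lact, mul_assoc]
lemma mul_ract (b c : S) (t : Option S) : b * ract c t = ract (b * c) t := by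
  cases t <;> simp [ract, mul_assoc]
lemma ract_lact (s : Option S) (b : S) (t : Option S) :
    ract (lact s b) t = lact s (ract b t) := by
  cases s <;> cases t <;> simp [lact, ract, mul_assoc]
lemma mul_lact (b : S) (s : Option S) (c : S) : b * lact s c = ract b s * c := by
  cases s <;> simp [lact, ract, mul_assoc]
lemma leL_iff (a b : S) : leL a b ↔ ∃ s : Option S, a = lact s b := by
  constructor
  · rintro (rfl | ⟨s, rfl⟩)
    · exact ⟨none, rfl⟩
    · exact ⟨some s, rfl⟩
  · rintro ⟨s, rfl⟩
    cases s
    · exact Or.inl rfl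
    · exact Or.inr ⟨_, rfl⟩
lemma leR_iff (a b : S) : leR a b ↔ ∃ t : Option S, a = ract b t := by
  constructor
  · rintro (rfl | ⟨t, rfl⟩)
    · exact ⟨none, rfl⟩
    · exact ⟨some t, rfl⟩
  · rintro ⟨t, rfl⟩
    cases t
    · exact Or.inl rfl
    · exact Or.inr ⟨_, rfl⟩
lemma leL_refl (a : S) : leL a a := Or.inl rfl
lemma leR_refl (a : S) : leR a a := Or.inl rfl
lemma lact_lact (s t : Option S) (b : S) :
    lact s (lact t b) = lact (match s, t with
      | none, t => t | s, none => s | some s, some t => some (s * t)) b := by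
  cases s <;> cases t <;> simp [lact, mul_assoc]
lemma ract_ract (b : S) (s t : Option S) :
    ract (ract b s) t = ract b (match s, t with
      | none, t => t | s, none => s | some s, some t => some (s * t)) := by
  cases s <;> cases t <;> simp [ract, mul_assoc]
lemma leL_trans {a b c : S} (h1 : leL a b) (h2 : leL b c) : leL a c := by
  rw [leL_iff] at *
  obtain ⟨s, rfl⟩ := h1
  obtain ⟨t, rfl⟩ := h2
  exact ⟨_, lact_lact s t c⟩
lemma leR_trans {a b c : S} (h1 : leR a b) (h2 : leR b c) : leR a c := by
  rw [leR_iff] at *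
  obtain ⟨s, rfl⟩ := h1
  obtain ⟨t, rfl⟩ := h2
  exact ⟨_, (ract_ract c t s)⟩
lemma leH_refl (a : S) : leH a a := ⟨leL_refl a, leR_refl a⟩
lemma leH_trans {a b c : S} (h1 : leH a b) (h2 : leH b c) : leH a c :=
  ⟨leL_trans h1.1 h2.1, leR_trans h1.2 h2.2⟩
lemma eqvH_refl (a : S) : eqvH a a := ⟨leH_refl a, leH_refl a⟩
lemma eqvH_symm {a b : S} (h : eqvH a b) : eqvH b a := ⟨h.2, h.1⟩
lemma eqvH_trans {a b c : S} (h1 : eqvH a b) (h2 : eqvH b c) : eqvH a c :=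
  ⟨leH_trans h1.1 h2.1, leH_trans h2.2 h1.2⟩

end Aux

section Aux2


variable {S : Type u} [Semigroup S]

lemma ltH_trans {a b c : S} (h1 : ltH a b) (h2 : ltH b c) : ltH a c :=
  ⟨leH_trans h1.1 h2.1, fun hca => h2.2 (leH_trans hca h1.1)⟩

lemma spow_succ (a : S) (k : ℕ) (hk : 1 ≤ k) : spow a (k + 1) = spow a k * a := by
  match k, hk with
  | k + 1, _ => rfl

lemma spow_succ' (a : S) (k : ℕ) (hk : 1 ≤ k) : spow a (k + 1) = a * spow a k := by
  induction k with
  | zero => omega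
  | succ k ih =>
    rcases Nat.eq_zero_or_pos k with rfl | hk'
    · rfl
    · calc spow a (k + 1 + 1) = spow a (k + 1) * a := rfl
        _ = (a * spow a k) * a := by rw [ih hk']
        _ = a * (spow a k * a) := mul_assoc _ _ _
        _ = a * spow a (k + 1) := by rw [← spow_succ a k hk']

lemma spow_add (a : S) (p q : ℕ) (hp : 1 ≤ p) (hq : 1 ≤ q) :
    spow a (p + q) = spow a p * spow a q := by
  induction q with
  | zero => omega
  | succ q ih =>
    rcases Nat.eq_zero_or_pos q with rfl | hq'
    · exact spow_succ a p hp
    · rw [show p + (q + 1) = (p + q) + 1 from rfl, spow_succ a (p + q) (by omega),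
        ih hq', spow_succ a q hq', mul_assoc]

lemma mem_le_height {T : Type u} {lt : T → T → Prop} {m : ℕ}
    (hm : m ∈ chainLengths lt) : (m : ℕ∞) ≤ heightOf lt :=
  le_iSup₂ (f := fun m (_ : m ∈ chainLengths lt) => (m : ℕ∞)) m hm


end Aux2

section Green
variable {S : Type u} [Semigroup S]

variable {S : Type u} [Semigroup S]

/-- Green's theorem, elementary form: if `x H x²` then the `H`-class of `x` is a subgroup. -/
lemma isSubgroup_of_eqvH_sq (x : S) (hx : eqvH x (x * x)) :
    IsSubgroupSet {b : S | eqvH b x} := by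
  obtain ⟨u, hu⟩ := (leR_iff x (x * x)).1 hx.1.2
  obtain ⟨v, hv⟩ := (leL_iff x (x * x)).1 hx.1.1
  set e : S := ract x u with he
  have hevx : e = lact v x := by
    have : ract (lact v (x * x)) u = lact v (ract (x * x) u) := ract_lact v (x * x) u
    rw [← hv, ← hu] at this
    exact this
  have hxe : x * e = x := by rw [he, mul_ract, ← hu]
  have hex : e * x = x := by rw [hevx, lact_mul, ← hv]
  have hee : e * e = e := by
    nth_rewrite 1 [hevx]
    nth_rewrite 1 [he]
    rw [lact_mul, mul_ract, ← hu, ← hevx]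
  have heHx : eqvH e x := by
    refine ⟨⟨?_, ?_⟩, ⟨?_, ?_⟩⟩
    · rw [leL_iff]; exact ⟨v, hevx⟩
    · rw [leR_iff]; exact ⟨u, he⟩
    · exact Or.inr ⟨x, hxe.symm⟩
    · exact Or.inr ⟨x, hex.symm⟩
  have hid : ∀ h : S, eqvH h x → e * h = h ∧ h * e = h := by
    intro h hh
    have hhe : leH h e := leH_trans hh.1 heHx.2
    obtain ⟨s, hs⟩ := (leL_iff h e).1 hhe.1
    obtain ⟨t, ht⟩ := (leR_iff h e).1 hhe.2
    constructor
    · rw [ht, mul_ract, hee]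
    · rw [hs, lact_mul, hee]
  have hclos : ∀ h k : S, eqvH h x → eqvH k x → eqvH (h * k) x := by
    intro h k hh hk
    have heh : leH e h := leH_trans heHx.1 hh.2
    have hek : leH e k := leH_trans heHx.1 hk.2
    obtain ⟨t, ht⟩ := (leR_iff e k).1 hek.2
    have h1 : leR h (h * k) := by
      rw [leR_iff]
      exact ⟨t, by rw [← mul_ract, ← ht, (hid h hh).2]⟩
    obtain ⟨w, hw⟩ := (leL_iff e h).1 heh.1
    have h2 : leL k (h * k) := by
      rw [leL_iff]
      exact ⟨w, by rw [← lact_mul, ← hw, (hid k hk).1]⟩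
    refine ⟨⟨?_, ?_⟩, ⟨?_, ?_⟩⟩
    · exact leL_trans (Or.inr ⟨h, rfl⟩) hk.1.1
    · exact leR_trans (Or.inr ⟨k, rfl⟩) hh.1.2
    · exact leL_trans hk.2.1 h2
    · exact leR_trans hh.2.2 h1
  refine ⟨fun h hh k hk => hclos h k hh hk, e, heHx, fun h hh => hid h hh, ?_⟩
  intro h hh
  have heh : leH e h := leH_trans heHx.1 hh.2
  obtain ⟨u₁, hu1⟩ := (leR_iff e h).1 heh.2
  obtain ⟨w₁, hw1⟩ := (leL_iff e h).1 heh.1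
  set k : S := lact u₁ e with hk
  set m : S := ract e w₁ with hm
  have hhk : h * k = e := by rw [hk, mul_lact, ← hu1, hee]
  have hmh : m * h = e := by rw [hm, ← mul_lact, ← hw1, hee]
  have hgm : e * k = m * e := by
    have h3 := mul_assoc m h k
    rw [hmh, hhk] at h3
    exact h3
  set g : S := e * k with hg
  have hhg : h * g = e := by rw [hg, ← mul_assoc, (hid h hh).2, hhk]
  have hgh : g * h = e := by rw [hgm, mul_assoc, (hid h hh).1, hmh]
  have hgx : eqvH g x := by
    refine eqvH_trans ⟨⟨?_, ?_⟩, ⟨?_, ?_⟩⟩ heHx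
    · exact Or.inr ⟨m, hgm⟩
    · exact Or.inr ⟨k, hg⟩
    · exact Or.inr ⟨h, hhg.symm⟩
    · exact Or.inr ⟨h, hgh.symm⟩
  exact ⟨g, hgx, hhg, hgh⟩


end Green

/-- If `H_H(S) = n < ∞` then for every `a ∈ S`, `aⁿ` is `H`-related to
`a^(2n)`, the `H`-class of `aⁿ` is a subgroup of `S`, and consequently `S` is group-bound:


every element has a positive power lying in a subgroup. -/
theorem finite_H_height_group_bound (S : Type u) [Semigroup S] (n : ℕ)
    (h : HH S = (n : ℕ∞)) :
    ∀ a : S, eqvH (spow a n) (spow a (2 * n)) ∧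
      IsSubgroupSet {b : S | eqvH b (spow a n)} ∧
      ∃ k : ℕ, 1 ≤ k ∧ ∃ G : Set S, spow a k ∈ G ∧ IsSubgroupSet G := by
  intro a
  -- every chain length is at most n
  have hmem_le_n : ∀ m : ℕ, m ∈ chainLengths (ltH (S := S)) → m ≤ n := by
    intro m hm
    have := mem_le_height hm
    rw [show heightOf (ltH (S := S)) = HH S from rfl, h] at this
    exact_mod_cast this
  -- n ≥ 1 since S is nonempty
  have hn1 : 1 ≤ n := by
    refine hmem_le_n 1 ⟨fun _ => a, ?_⟩
    intro i j hij
    rw [Fin.lt_def] at hij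
    have := i.isLt
    have := j.isLt
    omega
  -- consecutive powers descend in ≤_H
  have hchain : ∀ m : ℕ, 1 ≤ m → leH (spow a (m + 1)) (spow a m) := by
    intro m hm
    exact ⟨Or.inr ⟨a, spow_succ' a m hm⟩, Or.inr ⟨a, spow_succ a m hm⟩⟩
  -- some step must stabilize
  have key : ∃ m : ℕ, 1 ≤ m ∧ m ≤ n ∧ leH (spow a m) (spow a (m + 1)) := by
    by_contra hc
    push_neg at hc
    have hlt : ∀ m, 1 ≤ m → m ≤ n → ltH (spow a (m + 1)) (spow a m) :=
      fun m h1 h2 => ⟨hchain m h1, hc m h1 h2⟩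
    have hstep : ∀ q p : ℕ, 1 ≤ p → p < q → q ≤ n + 1 → ltH (spow a q) (spow a p) := by
      intro q
      induction q with
      | zero => omega
      | succ q ih =>
        intro p hp hpq hq
        rcases Nat.lt_or_ge p q with hlt' | hge
        · exact ltH_trans (hlt q (by omega) (by omega)) (ih p hp hlt' (by omega))
        · have hpq' : p = q := by omega
          subst hpq'
          exact hlt p hp (by omega)
    have hmem : (n + 1 : ℕ) ∈ chainLengths (ltH (S := S)) := by
      refine ⟨fun i => spow a (i.val + 1), ?_⟩
      intro i j hij
      rw [Fin.lt_def] at hij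
      have := j.isLt
      exact hstep (j.val + 1) (i.val + 1) (by omega) (by omega) (by omega)
    have := hmem_le_n _ hmem
    omega
  obtain ⟨m, hm1, hmn, hmle⟩ := key
  -- propagate: a^m H a^j for all j ≥ m
  have hEm : ∀ j : ℕ, m ≤ j → eqvH (spow a m) (spow a j) := by
    obtain ⟨s, hs⟩ := (leL_iff _ _).1 hmle.1
    obtain ⟨t, ht⟩ := (leR_iff _ _).1 hmle.2
    have hLstep : ∀ j, m ≤ j → spow a j = lact s (spow a (j + 1)) := by
      intro j hj
      rcases Nat.eq_or_lt_of_le hj with rfl | hlt'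
      · exact hs
      · obtain ⟨k, rfl⟩ : ∃ k, j = m + (k + 1) := ⟨j - m - 1, by omega⟩
        rw [spow_add a m (k + 1) hm1 (by omega), hs, lact_mul,
          ← spow_add a (m + 1) (k + 1) (by omega) (by omega)]
        have he : m + 1 + (k + 1) = m + (k + 1) + 1 := by omega
        rw [he]
    have hRstep : ∀ j, m ≤ j → spow a j = ract (spow a (j + 1)) t := by
      intro j hj
      rcases Nat.eq_or_lt_of_le hj with rfl | hlt'
      · exact ht
      · obtain ⟨k, rfl⟩ : ∃ k, j = m + (k + 1) := ⟨j - m - 1, by omega⟩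
        rw [show m + (k + 1) = (k + 1) + m from by omega,
          spow_add a (k + 1) m (by omega) hm1, ht, mul_ract,
          ← spow_add a (k + 1) (m + 1) (by omega) (by omega)]
        have he : k + 1 + (m + 1) = k + 1 + m + 1 := by omega
        rw [he]
    have hLge : ∀ k : ℕ, leL (spow a m) (spow a (m + k)) := by
      intro k
      induction k with
      | zero => exact leL_refl _
      | succ k ih =>
        exact leL_trans ih ((leL_iff _ _).2 ⟨s, hLstep (m + k) (by omega)⟩)
    have hRge : ∀ k : ℕ, leR (spow a m) (spow a (m + k)) := by
      intro k
      induction k with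
      | zero => exact leR_refl _
      | succ k ih =>
        exact leR_trans ih ((leR_iff _ _).2 ⟨t, hRstep (m + k) (by omega)⟩)
    intro j hj
    obtain ⟨k, rfl⟩ : ∃ k, j = m + k := ⟨j - m, by omega⟩
    refine ⟨⟨hLge k, hRge k⟩, ?_⟩
    rcases Nat.eq_zero_or_pos k with rfl | hk'
    · exact leH_refl _
    · constructor
      · exact Or.inr ⟨spow a k, by rw [show m + k = k + m from by omega,
          spow_add a k m hk' hm1]⟩
      · exact Or.inr ⟨spow a k, spow_add a m k hm1 hk'⟩
  have h1 : eqvH (spow a n) (spow a (2 * n)) :=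
    eqvH_trans (eqvH_symm (hEm n hmn)) (hEm (2 * n) (by omega))
  have hsq : spow a n * spow a n = spow a (2 * n) := by
    rw [← spow_add a n n hn1 hn1]
    have he : n + n = 2 * n := by omega
    rw [he]
  have h2 : IsSubgroupSet {b : S | eqvH b (spow a n)} := by
    refine isSubgroup_of_eqvH_sq (spow a n) ?_
    rw [hsq]
    exact h1
  exact ⟨h1, h2, n, hn1, {b : S | eqvH b (spow a n)}, eqvH_refl _, h2⟩


end GreenHeights
end

section
/- Let S be a semigroup with zero 0, with S ≠ {0}, and let I be the left socle of S. Then H_L(S) is finite if and only if H_L(S/I) is finite, in which case H_L(S) = H_L(S/I) + 1. -/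
namespace GreenHeights

universe u

/-- A (two-sided) ideal of a semigroup, bundled. -/
structure SemigroupIdeal (S : Type u) [Semigroup S] where
  carrier : Set S
  nonempty : carrier.Nonempty
  mul_mem_left : ∀ (s : S) {a : S}, a ∈ carrier → s * a ∈ carrier
  mul_mem_right : ∀ (s : S) {a : S}, a ∈ carrier → a * s ∈ carrier

/-- The Rees quotient `S/I`: its carrier is `(S \ I) ∪ {0}`, where `none` plays the role
of the new zero `0`. -/
abbrev ReesQuotient {S : Type u} [Semigroup S] (I : SemigroupIdeal S) : Type u :=
  Option {x : S // x ∉ I.carrier}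

namespace ReesQuotient

variable {S : Type u} [Semigroup S] {I : SemigroupIdeal S}

open Classical in
/-- The natural projection `S → S/I`. -/
noncomputable def mk (I : SemigroupIdeal S) (x : S) : ReesQuotient I :=
  if h : x ∈ I.carrier then none else some ⟨x, h⟩

/-- Multiplication in the Rees quotient: `a · b = ab` if `a, b, ab ∈ S \ I`,
and `a · b = 0` otherwise. -/
noncomputable def rmul (I : SemigroupIdeal S) :
    ReesQuotient I → ReesQuotient I → ReesQuotient I
  | some x, some y => mk I (x.1 * y.1)
  | _, _ => none

noncomputable instance : Mul (ReesQuotient I) := ⟨rmul I⟩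

theorem none_mul (b : ReesQuotient I) : (none : ReesQuotient I) * b = none := by
  cases b <;> rfl

theorem mul_none (a : ReesQuotient I) : a * (none : ReesQuotient I) = none := by
  cases a <;> rfl

theorem mk_mul_some (a : S) (y : {x : S // x ∉ I.carrier}) :
    mk I a * (some y : ReesQuotient I) = mk I (a * y.1) := by
  by_cases h : a ∈ I.carrier
  · have h2 : a * y.1 ∈ I.carrier := I.mul_mem_right y.1 h
    simp only [mk, dif_pos h, dif_pos h2]
    exact none_mul _
  · simp only [mk, dif_neg h]
    rfl

theorem some_mul_mk (x : {x : S // x ∉ I.carrier}) (b : S) :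
    (some x : ReesQuotient I) * mk I b = mk I (x.1 * b) := by
  by_cases h : b ∈ I.carrier
  · have h2 : x.1 * b ∈ I.carrier := I.mul_mem_left x.1 h
    simp only [mk, dif_pos h, dif_pos h2]
    exact mul_none _
  · simp only [mk, dif_neg h]
    rfl

noncomputable instance : Semigroup (ReesQuotient I) where
  mul_assoc a b c := by
    rcases a with _ | x
    · rw [none_mul, none_mul, none_mul]
    rcases b with _ | y
    · rw [mul_none, none_mul, mul_none]
    rcases c with _ | z
    · rw [mul_none, mul_none, mul_none]
    · show mk I (x.1 * y.1) * some z = some x * mk I (y.1 * z.1)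
      rw [mk_mul_some, some_mul_mk, mul_assoc]

end ReesQuotient

/-- The left socle of a semigroup with zero `z`: the union of `{z}` and all `0`-minimal
`L`-classes. -/
def leftSocle {S : Type u} [Semigroup S] (z : S) : Set S :=
  {a : S | a = z ∨ ∀ b : S, ltL b a → b = z}

/-!
An element of `S` with two elements strictly `L`-below it is not in the left socle, and below an
element outside the socle there is a nonzero element and then `0`. Hence dropping the last element
of an `L`-chain of `S` and projecting to `S/I` gives an `L`-chain of `S/I`; conversely, dropping the
last element of an `L`-chain of `S/I` (possibly `0'`) and appending a nonzero element and `0`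
gives an `L`-chain of `S` one longer than the original.
-/

def IsStrictChain {T : Type u} (lt : T → T → Prop) {m : ℕ} (c : Fin m → T) : Prop :=
  ∀ i j : Fin m, i < j → lt (c j) (c i)

section Chains

variable {T : Type u} {lt : T → T → Prop}

theorem le_heightOf {m : ℕ} (h : m ∈ chainLengths lt) : (m : ℕ∞) ≤ heightOf lt :=
  le_iSup₂ (f := fun (k : ℕ) (_ : k ∈ chainLengths lt) => (k : ℕ∞)) m h

theorem IsStrictChain.snoc {n : ℕ} {c : Fin n → T} (hc : IsStrictChain lt c) {a : T}
    (ha : ∀ i, lt a (c i)) : IsStrictChain lt (Fin.snoc c a : Fin (n + 1) → T) := by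
  intro i j hij
  induction j using Fin.lastCases with
  | last =>
    obtain ⟨i, rfl⟩ := Fin.exists_castSucc_eq.2 (Fin.ne_last_of_lt hij)
    simpa only [Fin.snoc_last, Fin.snoc_castSucc] using ha i
  | cast j =>
    obtain ⟨i, rfl⟩ := Fin.exists_castSucc_eq.2 (Fin.ne_last_of_lt hij)
    simpa only [Fin.snoc_castSucc] using hc i j (Fin.castSucc_lt_castSucc_iff.1 hij)

theorem heightOf_eq_add_one {T' : Type u} {lt' : T' → T' → Prop}
    (down : ∀ m, m + 1 ∈ chainLengths lt → m ∈ chainLengths lt')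
    (up : ∀ m, m ∈ chainLengths lt' → m + 1 ∈ chainLengths lt) :
    heightOf lt = heightOf lt' + 1 := by
  apply le_antisymm
  · refine iSup₂_le fun m hm => ?_
    cases m with
    | zero => simp
    | succ m => exact_mod_cast add_le_add_left (le_heightOf (down m hm)) 1
  · have hne : (chainLengths lt').Nonempty := ⟨0, Fin.elim0, fun i => i.elim0⟩
    rw [heightOf, ENat.biSup_add hne]
    exact iSup₂_le fun m hm => by exact_mod_cast le_heightOf (up m hm)

end Chains

section GreenL

variable {S : Type u} [Semigroup S] {a b c z : S}

theorem leL_trans_s9 (hab : leL a b) (hbc : leL b c) : leL a c := by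
  rcases hab with rfl | ⟨s, rfl⟩ <;> rcases hbc with rfl | ⟨t, rfl⟩
  · exact Or.inl rfl
  · exact Or.inr ⟨t, rfl⟩
  · exact Or.inr ⟨s, rfl⟩
  · exact Or.inr ⟨s * t, (mul_assoc s t _).symm⟩

theorem ltL_trans (hab : ltL a b) (hbc : ltL b c) : ltL a c :=
  ⟨leL_trans_s9 hab.1 hbc.1, fun hca => hbc.2 (leL_trans_s9 hca hab.1)⟩

theorem zero_leL (hz : ∀ s, z * s = z) (b : S) : leL z b :=
  Or.inr ⟨z, (hz b).symm⟩

theorem not_ltL_zero (hz : ∀ s, z * s = z) : ¬ ltL b z :=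
  fun h => h.2 (zero_leL hz b)

theorem zero_ltL_of_ne (hzl : ∀ s, z * s = z) (hzr : ∀ s, s * z = z) (hb : b ≠ z) : ltL z b := by
  refine ⟨zero_leL hzl b, ?_⟩
  rintro (rfl | ⟨s, rfl⟩)
  · exact hb rfl
  · exact hb (hzr s)

theorem notMem_leftSocle_of_ltL_of_ltL (hz : ∀ s, z * s = z) (hcb : ltL c b)
    (hba : ltL b a) : a ∉ leftSocle z := by
  rintro (rfl | hmin)
  · exact not_ltL_zero hz hba
  · exact not_ltL_zero hz (hmin b hba ▸ hcb)

theorem exists_ltL_ne_of_notMem_leftSocle (ha : a ∉ leftSocle z) :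
    ∃ b, ltL b a ∧ b ≠ z := by
  simpa only [not_forall, exists_prop] using (not_or.1 ha).2

end GreenL

namespace ReesQuotient

variable {S : Type u} [Semigroup S] {I : SemigroupIdeal S}

theorem none_leL (b : ReesQuotient I) : leL none b :=
  Or.inr ⟨none, (none_mul b).symm⟩

theorem ltL_none {a : ReesQuotient I} (ha : a ≠ none) : ltL none a := by
  refine ⟨none_leL a, ?_⟩
  rintro (rfl | ⟨s, rfl⟩)
  · exact ha rfl
  · exact ha (mul_none s)

theorem exists_eq_some_of_ltL {a b : ReesQuotient I} (h : ltL b a) : ∃ x, a = some x := by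
  rcases a with _ | x
  · exact absurd (none_leL b) h.2
  · exact ⟨x, rfl⟩

theorem mk_of_notMem {a : S} (ha : a ∉ I.carrier) : mk I a = some ⟨a, ha⟩ :=
  dif_neg ha

theorem some_leL_some_iff {x y : {a : S // a ∉ I.carrier}} :
    leL (some x : ReesQuotient I) (some y) ↔ leL x.1 y.1 := by
  constructor
  · rintro (h | ⟨_ | t, hs⟩)
    · exact Or.inl (congrArg Subtype.val (Option.some_injective _ h))
    · exact absurd hs (by simp [none_mul])
    · change some x = mk I (t.1 * y.1) at hs
      by_cases hty : t.1 * y.1 ∈ I.carrier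
      · simp [mk, hty] at hs
      · rw [mk_of_notMem hty, Option.some_inj] at hs
        exact Or.inr ⟨t.1, congrArg Subtype.val hs⟩
  · rintro (h | ⟨s, hs⟩)
    · exact Or.inl (congrArg some (Subtype.ext h))
    · have hsy : s * y.1 ∉ I.carrier := hs ▸ x.2
      refine Or.inr ⟨some ⟨s, fun hsI => hsy (I.mul_mem_right y.1 hsI)⟩, ?_⟩
      change some x = mk I (s * y.1)
      rw [mk_of_notMem hsy]
      exact congrArg some (Subtype.ext hs)

theorem some_ltL_some_iff {x y : {a : S // a ∉ I.carrier}} :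
    ltL (some x : ReesQuotient I) (some y) ↔ ltL x.1 y.1 := by
  simp only [ltL, some_leL_some_iff]

theorem mk_ltL_mk {a b : S} (hba : ltL b a) (ha : a ∉ I.carrier) :
    ltL (mk I b) (mk I a) := by
  rw [mk_of_notMem ha]
  by_cases hb : b ∈ I.carrier
  · rw [mk, dif_pos hb]
    exact ltL_none (Option.some_ne_none _)
  · rw [mk_of_notMem hb]
    exact some_ltL_some_iff.2 hba

end ReesQuotient

section LeftSocle

open ReesQuotient

variable {S : Type u} [Semigroup S] {z : S} {I : SemigroupIdeal S}

theorem mem_chainLengths_reesQuotient_of_succ (hz : ∀ s, z * s = z)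
    (hI : I.carrier = leftSocle z) {m : ℕ} (h : m + 1 ∈ chainLengths (ltL (S := S))) :
    m ∈ chainLengths (ltL (S := ReesQuotient I)) := by
  obtain ⟨c, hc⟩ := h
  refine ⟨fun i => mk I (c i.castSucc), fun i j hij => mk_ltL_mk (hc _ _ hij) ?_⟩
  rw [hI]
  exact notMem_leftSocle_of_ltL_of_ltL hz (hc _ (Fin.last m) (Fin.castSucc_lt_last j))
    (hc _ _ hij)

theorem add_two_mem_chainLengths (hzl : ∀ s, z * s = z) (hzr : ∀ s, s * z = z)
    (hS : ∃ a : S, a ≠ z) {k : ℕ} {c : Fin k → S} (hc : IsStrictChain ltL c)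
    (hsoc : ∀ i, c i ∉ leftSocle z) : k + 2 ∈ chainLengths (ltL (S := S)) := by
  obtain ⟨w, hwz, hw⟩ : ∃ w, w ≠ z ∧ ∀ i, ltL w (c i) := by
    cases k with
    | zero => exact hS.imp fun a ha => ⟨ha, fun i => i.elim0⟩
    | succ k =>
      obtain ⟨b, hb, hbz⟩ := exists_ltL_ne_of_notMem_leftSocle (hsoc (Fin.last k))
      refine ⟨b, hbz, fun i => ?_⟩
      rcases (Fin.le_last i).lt_or_eq with hi | rfl
      · exact ltL_trans hb (hc _ _ hi)
      · exact hb
  refine ⟨_, (hc.snoc hw).snoc fun i => zero_ltL_of_ne hzl hzr ?_⟩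
  induction i using Fin.lastCases with
  | last => simpa only [Fin.snoc_last] using hwz
  | cast i => simpa only [Fin.snoc_castSucc] using fun h => hsoc i (Or.inl h)

theorem succ_mem_chainLengths_of_reesQuotient (hzl : ∀ s, z * s = z) (hzr : ∀ s, s * z = z)
    (hS : ∃ a : S, a ≠ z) (hI : I.carrier = leftSocle z) {m : ℕ}
    (h : m ∈ chainLengths (ltL (S := ReesQuotient I))) :
    m + 1 ∈ chainLengths (ltL (S := S)) := by
  obtain ⟨x, hx⟩ := h
  cases m with
  | zero => exact ⟨fun _ => z, fun i j hij => absurd hij (by omega)⟩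
  | succ k =>
    choose y hy using fun i : Fin k =>
      exists_eq_some_of_ltL (hx i.castSucc i.succ Fin.castSucc_lt_succ)
    refine add_two_mem_chainLengths hzl hzr hS (c := fun i => (y i).1) (fun i j hij => ?_)
      fun i => hI ▸ (y i).2
    have hxij := hx _ _ (Fin.castSucc_lt_castSucc_iff.2 hij)
    rwa [hy, hy, some_ltL_some_iff] at hxij

end LeftSocle

/-- For a semigroup `S` with zero `z` and `S ≠ {z}`, and `I` the left
socle of `S`: `H_L(S)` is finite iff `H_L(S/I)` is finite, in which case
`H_L(S) = H_L(S/I) + 1`. -/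
theorem L_height_and_left_socle (S : Type u) [Semigroup S] (z : S)
    (hz : ∀ s : S, z * s = z ∧ s * z = z)
    (hS : ∃ a : S, a ≠ z)
    (I : SemigroupIdeal S) (hI : I.carrier = leftSocle z) :
    (HL S < ⊤ ↔ HL (ReesQuotient I) < ⊤) ∧
    (HL S < ⊤ → HL S = HL (ReesQuotient I) + 1) := by
  have hzl : ∀ s, z * s = z := fun s => (hz s).1
  have hzr : ∀ s, s * z = z := fun s => (hz s).2
  have hHL : HL S = HL (ReesQuotient I) + 1 :=
    heightOf_eq_add_one (fun _ => mem_chainLengths_reesQuotient_of_succ hzl hI)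
      (fun _ => succ_mem_chainLengths_of_reesQuotient hzl hzr hS hI)
  rw [hHL, ENat.add_lt_top]
  exact ⟨and_iff_left ENat.one_lt_top, fun _ => rfl⟩

end GreenHeights
end
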